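/- For every integer n ≥ 6, the integer ((n-5)!/2) * (C(n,6) - C(n-1,5)) is congruent modulo (n-5)! to: -((n-5)!/2) * C(n-1,5) if n ≡ 0 (mod 8); to 0 if n is not congruent to 0 or 7 mod 8; and to ((n-5)!/2) * C(n,6) if n ≡ 7 (mod 8). -/

import Mathlib

/-! For `n ≤ 6` the modulus `(n - 5)!` is `1`. For `n ≥ 7` it is even, so `(n - 5)! / 2 * x`
modulo `(n - 5)!` only depends on the parity of `x`. By Pascal's rule the left-hand side is
`(n - 5)! / 2 * C(n - 1, 6)`, and by Lucas' theorem the parities of `C(m, 6)` and `C(m, 5)` only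
depend on `m mod 8`. -/

theorem Choose.choose_modEq_choose_mod_pow {p : ℕ} [Fact p.Prime] {a k : ℕ} (hk : k < p ^ a)
    (n : ℕ) : n.choose k ≡ (n % p ^ a).choose k [MOD p] := by
  induction a generalizing n k with
  | zero => simp_all [Nat.ModEq.refl]
  | succ a ih =>
    have hkp : k / p < p ^ a := Nat.div_lt_of_lt_mul (by rwa [mul_comm, ← pow_succ])
    have hmod : n % p ^ (a + 1) % p = n % p := by
      rw [pow_succ', Nat.mod_mul_right_mod]
    have hdiv : n % p ^ (a + 1) / p = n / p % p ^ a := by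
      rw [pow_succ', Nat.mod_mul_right_div_self]
    calc n.choose k ≡ (n % p).choose (k % p) * (n / p).choose (k / p) [MOD p] :=
          Choose.choose_modEq_choose_mod_mul_choose_div_nat
      _ ≡ (n % p).choose (k % p) * (n / p % p ^ a).choose (k / p) [MOD p] :=
          (ih hkp (n / p)).mul_left _
      _ ≡ (n % p ^ (a + 1)).choose k [MOD p] := by
          rw [← hmod, ← hdiv]
          exact Choose.choose_modEq_choose_mod_mul_choose_div_nat.symm

theorem Choose.choose_modEq_choose_mod_eight {k : ℕ} (hk : k < 8) (n : ℕ) :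
    (n.choose k : ℤ) ≡ (n % 8).choose k [ZMOD 2] := by
  have := Fact.mk Nat.prime_two
  exact_mod_cast Int.natCast_modEq_iff.2 (choose_modEq_choose_mod_pow (p := 2) (a := 3) hk n)

theorem Int.ediv_two_mul_modEq_ediv_two_mul {F x y : ℤ} (hF : 2 ∣ F) (h : x ≡ y [ZMOD 2]) :
    F / 2 * x ≡ F / 2 * y [ZMOD F] := by
  obtain ⟨G, rfl⟩ := hF
  rw [Int.mul_ediv_cancel_left _ two_ne_zero, mul_comm 2 G]
  exact h.mul_left'

theorem stmt_4_general (n : ℕ) :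
    (n % 8 = 0 →
      ((Nat.factorial (n - 5) : ℤ) * ((Nat.choose n 6 : ℤ) - (Nat.choose (n - 1) 5 : ℤ))) / 2 ≡
        -((Nat.factorial (n - 5) : ℤ) / 2 * (Nat.choose (n - 1) 5 : ℤ))
          [ZMOD (Nat.factorial (n - 5) : ℤ)]) ∧
    (n % 8 ≠ 0 ∧ n % 8 ≠ 7 →
      ((Nat.factorial (n - 5) : ℤ) * ((Nat.choose n 6 : ℤ) - (Nat.choose (n - 1) 5 : ℤ))) / 2 ≡
        0 [ZMOD (Nat.factorial (n - 5) : ℤ)]) ∧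
    (n % 8 = 7 →
      ((Nat.factorial (n - 5) : ℤ) * ((Nat.choose n 6 : ℤ) - (Nat.choose (n - 1) 5 : ℤ))) / 2 ≡
        (Nat.factorial (n - 5) : ℤ) / 2 * (Nat.choose n 6 : ℤ)
          [ZMOD (Nat.factorial (n - 5) : ℤ)]) := by
  rcases Nat.lt_or_ge n 7 with hn | hn
  · have hF : ((n - 5).factorial : ℤ) = 1 := by
      rw [Nat.cast_eq_one, Nat.factorial_eq_one]; omega
    simp only [hF]
    exact ⟨fun _ ↦ Int.modEq_one, fun _ ↦ Int.modEq_one, fun _ ↦ Int.modEq_one⟩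
  have hF : 2 ∣ ((n - 5).factorial : ℤ) := by exact_mod_cast Nat.dvd_factorial two_pos (by omega)
  have hpascal : (n.choose 6 : ℤ) - (n - 1).choose 5 = (n - 1).choose 6 := by
    obtain ⟨m, rfl⟩ : ∃ m, n = m + 1 := ⟨n - 1, by omega⟩
    simp [Nat.choose_succ_succ']
  rw [hpascal, Int.mul_ediv_assoc' _ hF]
  have hc := Choose.choose_modEq_choose_mod_eight (by norm_num : 6 < 8) (n - 1)
  refine ⟨fun h ↦ ?_, fun h ↦ ?_, fun h ↦ ?_⟩
  · have hd := Choose.choose_modEq_choose_mod_eight (by norm_num : 5 < 8) (n - 1)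
    rw [show (n - 1) % 8 = 7 by omega] at hc hd
    rw [← mul_neg]
    refine Int.ediv_two_mul_modEq_ediv_two_mul hF ?_
    calc _ ≡ _ [ZMOD 2] := hc
      _ ≡ -((7 : ℕ).choose 5 : ℤ) [ZMOD 2] := by decide
      _ ≡ _ [ZMOD 2] := hd.symm.neg
  · rw [Nat.choose_eq_zero_of_lt (by omega : (n - 1) % 8 < 6)] at hc
    simpa using Int.ediv_two_mul_modEq_ediv_two_mul hF hc
  · have he := Choose.choose_modEq_choose_mod_eight (by norm_num : 6 < 8) n
    rw [show (n - 1) % 8 = 6 by omega] at hc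
    rw [h] at he
    refine Int.ediv_two_mul_modEq_ediv_two_mul hF ?_
    calc _ ≡ _ [ZMOD 2] := hc
      _ ≡ ((7 : ℕ).choose 6 : ℤ) [ZMOD 2] := by decide
      _ ≡ _ [ZMOD 2] := he.symm

theorem stmt_4 (n : ℕ) (hn : 6 ≤ n) :
    (n % 8 = 0 →
      ((Nat.factorial (n - 5) : ℤ) * ((Nat.choose n 6 : ℤ) - (Nat.choose (n - 1) 5 : ℤ))) / 2 ≡
        -((Nat.factorial (n - 5) : ℤ) / 2 * (Nat.choose (n - 1) 5 : ℤ))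
          [ZMOD (Nat.factorial (n - 5) : ℤ)]) ∧
    (n % 8 ≠ 0 ∧ n % 8 ≠ 7 →
      ((Nat.factorial (n - 5) : ℤ) * ((Nat.choose n 6 : ℤ) - (Nat.choose (n - 1) 5 : ℤ))) / 2 ≡
        0 [ZMOD (Nat.factorial (n - 5) : ℤ)]) ∧
    (n % 8 = 7 →
      ((Nat.factorial (n - 5) : ℤ) * ((Nat.choose n 6 : ℤ) - (Nat.choose (n - 1) 5 : ℤ))) / 2 ≡
        (Nat.factorial (n - 5) : ℤ) / 2 * (Nat.choose n 6 : ℤ)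
          [ZMOD (Nat.factorial (n - 5) : ℤ)]) :=
  stmt_4_general n
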